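/- The orbit space ℂ³/T², endowed with the quotient topology, is homeomorphic to ℝ⁴. -/

import Mathlib

/-- The action of `(θ, φ) ∈ T²` on `ℂ³`,
`(e^{iθ}, e^{iφ})·(z₁,z₂,z₃) = (e^{iθ}z₁, e^{iφ}z₂, e^{−i(θ+φ)}z₃)`. -/
noncomputable def torusAct (θ φ : ℝ) (z : ℂ × ℂ × ℂ) : ℂ × ℂ × ℂ :=
  (Complex.exp (θ * Complex.I) * z.1,
   Complex.exp (φ * Complex.I) * z.2.1,
   Complex.exp (-(θ + φ) * Complex.I) * z.2.2)

/-- The orbit equivalence relation of the `T²`-action on `ℂ³`. -/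
noncomputable def torusSetoid : Setoid (ℂ × ℂ × ℂ) where
  r z w := ∃ θ φ : ℝ, w = torusAct θ φ z
  iseqv := by
    constructor
    · exact fun z => ⟨0, 0, by simp [torusAct]⟩
    · rintro z w ⟨θ, φ, rfl⟩
      refine ⟨-θ, -φ, ?_⟩
      refine Prod.ext ?_ (Prod.ext ?_ ?_) <;>
        · simp only [torusAct, ← mul_assoc, ← Complex.exp_add]
          push_cast
          ring_nf
          simp
    · rintro z w v ⟨θ, φ, rfl⟩ ⟨θ', φ', rfl⟩
      refine ⟨θ + θ', φ + φ', ?_⟩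
      refine Prod.ext ?_ (Prod.ext ?_ ?_) <;>
        · simp only [torusAct, ← mul_assoc, ← Complex.exp_add]
          push_cast
          ring_nf


/-! The invariants `a = |z₁|² − |z₃|²`, `b = |z₂|² − |z₃|²` and `w = z₁z₂z₃` separate the orbits:
`t = |z₃|²` is the unique root with nonnegative `t, t + a, t + b` of the strictly increasing cubic
`(t + a)(t + b)t = |w|²`, which fixes all moduli `|zᵢ|²`, and `w` then fixes the phases up to the
torus action. The same cubic, through the intermediate value theorem, shows that every
`(a, b, w) ∈ ℝ × ℝ × ℂ` occurs. Finally the invariant map is proper because `‖z‖ ≤ 1 + ‖(a, b, w)‖`,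
so it is a quotient map and `ℂ³/T² ≃ₜ ℝ × ℝ × ℂ ≃ₜ ℝ⁴`. -/

open Complex Filter

noncomputable def invariantMap (z : ℂ × ℂ × ℂ) : ℝ × ℝ × ℂ :=
  (normSq z.1 - normSq z.2.2, normSq z.2.1 - normSq z.2.2, z.1 * z.2.1 * z.2.2)

lemma continuous_invariantMap : Continuous invariantMap := by
  unfold invariantMap
  fun_prop

lemma normSq_exp_ofReal_mul_I_mul (x : ℝ) (z : ℂ) : normSq (exp (x * I) * z) = normSq z := by
  rw [map_mul, normSq_eq_norm_sq, norm_exp_ofReal_mul_I, one_pow, one_mul]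

lemma exp_mul_I_mul_exp_mul_I_mul_exp_neg_add_mul_I (θ φ : ℝ) :
    exp (θ * I) * exp (φ * I) * exp (-(θ + φ) * I) = 1 := by
  rw [← exp_add, ← exp_add, ← exp_zero]
  ring_nf

lemma invariantMap_torusAct (θ φ : ℝ) (z : ℂ × ℂ × ℂ) :
    invariantMap (torusAct θ φ z) = invariantMap z := by
  have h₃ := normSq_exp_ofReal_mul_I_mul (-(θ + φ)) z.2.2
  push_cast at h₃
  have hprod : exp (θ * I) * z.1 * (exp (φ * I) * z.2.1) * (exp (-(θ + φ) * I) * z.2.2) =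
      z.1 * z.2.1 * z.2.2 := by
    linear_combination (z.1 * z.2.1 * z.2.2) * exp_mul_I_mul_exp_mul_I_mul_exp_neg_add_mul_I θ φ
  simp only [invariantMap, torusAct, normSq_exp_ofReal_mul_I_mul, h₃, hprod]

lemma mul_mul_lt_add_mul_add_mul_add {x₁ x₂ x₃ d : ℝ} (h₁ : 0 ≤ x₁) (h₂ : 0 ≤ x₂)
    (h₃ : 0 ≤ x₃) (hd : 0 < d) : x₁ * x₂ * x₃ < (x₁ + d) * (x₂ + d) * (x₃ + d) := by
  have h₁₂ : x₁ * x₂ < (x₁ + d) * (x₂ + d) :=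
    mul_lt_mul'' (by linarith) (by linarith) h₁ h₂
  exact mul_lt_mul'' h₁₂ (by linarith) (by positivity) h₃

lemma eq_of_sub_eq_sub_of_mul_mul_eq {x₁ x₂ x₃ y₁ y₂ y₃ : ℝ} (hx₁ : 0 ≤ x₁) (hx₂ : 0 ≤ x₂)
    (hx₃ : 0 ≤ x₃) (hy₁ : 0 ≤ y₁) (hy₂ : 0 ≤ y₂) (hy₃ : 0 ≤ y₃) (h₁ : x₁ - x₃ = y₁ - y₃)
    (h₂ : x₂ - x₃ = y₂ - y₃) (h : x₁ * x₂ * x₃ = y₁ * y₂ * y₃) : x₃ = y₃ := by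
  rcases lt_trichotomy x₃ y₃ with hlt | heq | hgt
  · have := mul_mul_lt_add_mul_add_mul_add hx₁ hx₂ hx₃ (sub_pos.2 hlt)
    rw [show x₁ + (y₃ - x₃) = y₁ by linarith, show x₂ + (y₃ - x₃) = y₂ by linarith,
      add_sub_cancel] at this
    linarith
  · exact heq
  · have := mul_mul_lt_add_mul_add_mul_add hy₁ hy₂ hy₃ (sub_pos.2 hgt)
    rw [show y₁ + (x₃ - y₃) = x₁ by linarith, show y₂ + (x₃ - y₃) = x₂ by linarith,
      add_sub_cancel] at this
    linarith

lemma exists_exp_mul_I_mul_eq_of_normSq_eq {u v : ℂ} (h : normSq u = normSq v) :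
    ∃ θ : ℝ, v = exp (θ * I) * u := by
  rcases eq_or_ne u 0 with rfl | hu
  · exact ⟨0, by simpa using h.symm⟩
  · refine ⟨arg (v / u), ?_⟩
    have hnorm : ‖v / u‖ = 1 := by
      rw [norm_div, norm_def, norm_def, ← h, div_self (by simpa [← norm_def] using hu)]
    have := norm_mul_exp_arg_mul_I (v / u)
    rw [hnorm, ofReal_one, one_mul] at this
    rw [this, div_mul_cancel₀ _ hu]

lemma exists_torusAct_eq_of_normSq_eq_of_mul_eq {z w : ℂ × ℂ × ℂ}
    (h₁ : normSq z.1 = normSq w.1) (h₂ : normSq z.2.1 = normSq w.2.1)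
    (h₃ : normSq z.2.2 = normSq w.2.2) (h : z.1 * z.2.1 * z.2.2 = w.1 * w.2.1 * w.2.2) :
    ∃ θ φ : ℝ, w = torusAct θ φ z := by
  obtain ⟨z₁, z₂, z₃⟩ := z
  obtain ⟨w₁, w₂, w₃⟩ := w
  obtain ⟨α, rfl⟩ := exists_exp_mul_I_mul_eq_of_normSq_eq h₁
  obtain ⟨β, rfl⟩ := exists_exp_mul_I_mul_eq_of_normSq_eq h₂
  obtain ⟨γ, rfl⟩ := exists_exp_mul_I_mul_eq_of_normSq_eq h₃
  simp only [torusAct, Prod.mk.injEq]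
  -- a vanishing coordinate leaves its own phase free to absorb the constraint on the third phase
  rcases eq_or_ne z₃ 0 with rfl | hz₃
  · exact ⟨α, β, rfl, rfl, by simp⟩
  rcases eq_or_ne z₁ 0 with rfl | hz₁
  · exact ⟨-(β + γ), β, by simp, rfl, by push_cast; ring_nf⟩
  rcases eq_or_ne z₂ 0 with rfl | hz₂
  · exact ⟨α, -(α + γ), rfl, by simp, by push_cast; ring_nf⟩
  refine ⟨α, β, rfl, rfl, mul_left_cancel₀ (mul_ne_zero hz₁ hz₂) ?_⟩
  linear_combination
    -(z₁ * z₂ * exp (γ * I) * z₃) * exp_mul_I_mul_exp_mul_I_mul_exp_neg_add_mul_I α β -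
      exp (-(α + β) * I) * h

lemma torusSetoid_iff {z w : ℂ × ℂ × ℂ} :
    torusSetoid z w ↔ invariantMap z = invariantMap w := by
  refine ⟨fun ⟨θ, φ, hw⟩ => hw ▸ (invariantMap_torusAct θ φ z).symm, fun h => ?_⟩
  simp only [invariantMap, Prod.mk.injEq] at h
  obtain ⟨h₁₃, h₂₃, hprod⟩ := h
  have h₃ : normSq z.2.2 = normSq w.2.2 :=
    eq_of_sub_eq_sub_of_mul_mul_eq (normSq_nonneg _) (normSq_nonneg _) (normSq_nonneg _)
      (normSq_nonneg _) (normSq_nonneg _) (normSq_nonneg _) h₁₃ h₂₃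
      (by simpa only [map_mul] using congrArg normSq hprod)
  exact exists_torusAct_eq_of_normSq_eq_of_mul_eq (by linarith) (by linarith) h₃ hprod

lemma exists_nonneg_cubic_eq (a b : ℝ) {c : ℝ} (hc : 0 ≤ c) :
    ∃ t, 0 ≤ t + a ∧ 0 ≤ t + b ∧ 0 ≤ t ∧ (t + a) * (t + b) * t = c := by
  set g : ℝ → ℝ := fun t => (t + a) * (t + b) * t
  set t₀ := max (max (-a) (-b)) 0
  have ha : -a ≤ t₀ := (le_max_left _ _).trans (le_max_left _ _)
  have hb : -b ≤ t₀ := (le_max_right _ _).trans (le_max_left _ _)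
  have h₀ : 0 ≤ t₀ := le_max_right _ _
  -- one of the three factors vanishes at `t₀`
  have hg₀ : g t₀ = 0 := by
    simp only [g, t₀, mul_eq_zero, add_eq_zero_iff_eq_neg]
    rcases max_choice (max (-a) (-b)) 0 with h | h <;> rw [h]
    · rcases max_choice (-a) (-b) with h' | h' <;> simp [h']
    · simp
  have hgT : c ≤ g (t₀ + c + 1) := calc
    c ≤ (c + 1) * (c + 1) * (c + 1) := by nlinarith
    _ ≤ g (t₀ + c + 1) := by simp only [g]; gcongr ?_ * ?_ * ?_ <;> nlinarith
  obtain ⟨t, ⟨ht₀, -⟩, ht⟩ := intermediate_value_Icc (by linarith)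
    (by fun_prop : Continuous g).continuousOn ⟨hg₀.symm ▸ hc, hgT⟩
  exact ⟨t, by linarith, by linarith, by linarith, ht⟩

lemma invariantMap_surjective : Function.Surjective invariantMap := by
  rintro ⟨a, b, w⟩
  obtain ⟨t, ha, hb, ht, hw⟩ := exists_nonneg_cubic_eq a b (normSq_nonneg w)
  have normSq_sqrt {s : ℝ} (hs : 0 ≤ s) : normSq (√s : ℂ) = s := by
    rw [normSq_ofReal, Real.mul_self_sqrt hs]
  have hprod : exp (arg w * I) * √(t + a) * √(t + b) * √t = w := by
    have : √(t + a) * √(t + b) * √t = ‖w‖ := by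
      rw [← Real.sqrt_mul ha, ← Real.sqrt_mul (by positivity), hw, norm_def]
    calc _ = ((√(t + a) * √(t + b) * √t : ℝ) : ℂ) * exp (arg w * I) := by push_cast; ring
      _ = w := by rw [this, norm_mul_exp_arg_mul_I]
  refine ⟨(exp (arg w * I) * √(t + a), √(t + b), √t), ?_⟩
  simp only [invariantMap, normSq_exp_ofReal_mul_I_mul, normSq_sqrt ha, normSq_sqrt hb,
    normSq_sqrt ht, hprod, add_sub_cancel_left]

lemma norm_le_one_add_norm_invariantMap (z : ℂ × ℂ × ℂ) :
    ‖z‖ ≤ 1 + ‖invariantMap z‖ := by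
  set R := ‖invariantMap z‖
  have h₁₃ : |normSq z.1 - normSq z.2.2| ≤ R := norm_fst_le (invariantMap z)
  have h₂₃ : |normSq z.2.1 - normSq z.2.2| ≤ R :=
    (norm_fst_le (invariantMap z).2).trans (norm_snd_le (invariantMap z))
  have hprod : normSq z.1 * normSq z.2.1 * normSq z.2.2 ≤ R ^ 2 := by
    have : ‖z.1 * z.2.1 * z.2.2‖ ≤ R :=
      (norm_snd_le (invariantMap z).2).trans (norm_snd_le (invariantMap z))
    rw [← map_mul, ← map_mul, ← Complex.sq_norm]
    exact pow_le_pow_left₀ (norm_nonneg _) this 2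
  have h₁ := normSq_nonneg z.1
  have h₂ := normSq_nonneg z.2.1
  have h₃ := normSq_nonneg z.2.2
  have hR : 0 ≤ R := norm_nonneg _
  have hR₂ := sq_nonneg R
  rw [abs_le] at h₁₃ h₂₃
  -- otherwise `|z₁|², |z₂|² ≥ 1`, so `|z₁z₂z₃|² ≥ |z₃|² > R²`
  have hz₃ : normSq z.2.2 ≤ 1 + R + R ^ 2 := by
    by_contra! hlt
    have h₁₂ : 1 ≤ normSq z.1 * normSq z.2.1 :=
      one_le_mul_of_one_le_of_one_le (by linarith) (by linarith)
    nlinarith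
  have norm_le {u : ℂ} (hu : normSq u ≤ (1 + R) ^ 2) : ‖u‖ ≤ 1 + R :=
    (pow_le_pow_iff_left₀ (norm_nonneg u) (by positivity) two_ne_zero).1
      (by rwa [Complex.sq_norm])
  exact norm_prod_le_iff.2 ⟨norm_le (by nlinarith),
    norm_prod_le_iff.2 ⟨norm_le (by nlinarith), norm_le (by nlinarith)⟩⟩

lemma isProperMap_invariantMap : IsProperMap invariantMap := by
  refine isProperMap_iff_tendsto_cocompact.2 ⟨continuous_invariantMap, ?_⟩
  rw [← Metric.cobounded_eq_cocompact, ← Metric.cobounded_eq_cocompact,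
    ← tendsto_norm_atTop_iff_cobounded]
  exact tendsto_atTop_mono (fun z => by linarith [norm_le_one_add_norm_invariantMap z])
    (tendsto_atTop_add_const_right _ (-1) tendsto_norm_cobounded_atTop)

theorem quotient_homeomorph_R4 :
    Nonempty (Quotient torusSetoid ≃ₜ (Fin 4 → ℝ)) := by
  have hquot : Topology.IsQuotientMap invariantMap :=
    isProperMap_invariantMap.isClosedMap.isQuotientMap continuous_invariantMap
      invariantMap_surjective
  have hdim : Module.finrank ℝ (ℝ × ℝ × ℂ) = Module.finrank ℝ (Fin 4 → ℝ) := by simp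
  exact ⟨(Homeomorph.Quotient.congrRight fun _ _ => torusSetoid_iff).trans <|
    (hquot.homeomorph (f := ⟨_, continuous_invariantMap⟩)).trans
      (ContinuousLinearEquiv.ofFinrankEq hdim).toHomeomorph⟩
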